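/- arXiv:2601.13483 — 4 statements merged into one kernel-verified Lean document; each statement's English description precedes it below -/
import Mathlib

section
/- For every i ∈ [n] and every j ∈ [u_i+1, v_i], the tuple a_{i,j} belongs to 𝓛; that is, u_t ≤ (a_{i,j})_t ≤ v_t for every t ∈ [n], and the entries of a_{i,j} are strictly increasing. -/
/-! From position `i` on, `a_{i,j}` is the pointwise maximum of `u` and the line `j + (t - i)`.
Both are strictly increasing, and the line stays below `v` because `v` increases by at least one
per step starting from `v i ≥ j`. -/

namespace LadderPaper

/-- The tuple `a_{i,j}`: entry `t` is `u t` for `t < i` and `max (j + (t - i)) (u t)` for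
`t ≥ i` (indices `t ∈ [1,n]`; entries outside `[1,n]` are set to `0`). -/
def atuple (u : ℕ → ℤ) (n i : ℕ) (j : ℤ) : ℕ → ℤ := fun t =>
  if 1 ≤ t ∧ t ≤ n then
    (if t < i then u t else max (j + ((t : ℤ) - (i : ℤ))) (u t))
  else 0

/-- The tuple `b_{i,j}`: like `a_{i,j}` but with `i`-th entry `j - 1`. -/
def btuple (u : ℕ → ℤ) (n i : ℕ) (j : ℤ) : ℕ → ℤ := fun t =>
  if 1 ≤ t ∧ t ≤ n then
    (if t < i then u t
     else if t = i then j - 1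
     else max (j + ((t : ℤ) - (i : ℤ))) (u t))
  else 0

/-- The tuple `(u_1, …, u_n)`. -/
def utuple (u : ℕ → ℤ) (n : ℕ) : ℕ → ℤ := fun t =>
  if 1 ≤ t ∧ t ≤ n then u t else 0

/-- The lattice `𝓛` of tuples `c` with `u t ≤ c t ≤ v t` for `t ∈ [1,n]`, strictly
increasing entries, and (normalization) `c t = 0` outside `[1,n]`.  It carries the
componentwise (induced product) order. -/
def ladderL (n : ℕ) (u v : ℕ → ℤ) : Set (ℕ → ℤ) :=
  {c | (∀ t, 1 ≤ t → t ≤ n → u t ≤ c t ∧ c t ≤ v t) ∧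
       (∀ t, 1 ≤ t → t + 1 ≤ n → c t < c (t + 1)) ∧
       (∀ t, t = 0 ∨ n < t → c t = 0)}

/-- The set `P_𝓛 = { a_{i,j} : i ∈ [n], j ∈ [u_i + 1, v_i] }`. -/
def PL (n : ℕ) (u v : ℕ → ℤ) : Set (ℕ → ℤ) :=
  {x | ∃ i : ℕ, ∃ j : ℤ, 1 ≤ i ∧ i ≤ n ∧ u i + 1 ≤ j ∧ j ≤ v i ∧ x = atuple u n i j}

/-- The product poset `𝓛 × [r]`. -/
def ladderLr (n : ℕ) (u v : ℕ → ℤ) (r : ℤ) : Set ((ℕ → ℤ) × ℤ) :=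
  {p | p.1 ∈ ladderL n u v ∧ 1 ≤ p.2 ∧ p.2 ≤ r}

/-- The set `P_{𝓛×[r]} = { (a_{i,j}, 1) } ∪ { ((u_1,…,u_n), k) : k ∈ [2,r] }`. -/
def PLr (n : ℕ) (u v : ℕ → ℤ) (r : ℤ) : Set ((ℕ → ℤ) × ℤ) :=
  {p | (p.1 ∈ PL n u v ∧ p.2 = 1) ∨ (p.1 = utuple u n ∧ 2 ≤ p.2 ∧ p.2 ≤ r)}

/-- `ε_i > 1`, with the convention `ε_n > 1` (i.e. `i = n` or `u_{i+1} - u_i > 1`). -/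
def epsGt1 (u : ℕ → ℤ) (n i : ℕ) : Prop := i = n ∨ 1 < u (i + 1) - u i

/-- `θ_{i-1} > 1`, with the convention `θ_0 > 1` (i.e. `i = 1` or `v_i - v_{i-1} > 1`). -/
def thetaGt1 (v : ℕ → ℤ) (i : ℕ) : Prop := i = 1 ∨ 1 < v i - v (i - 1)

/-- Membership in `C = { i ∈ [n-1] : v_i < u_{i+1} } ∪ { n }`. -/
def inC (n : ℕ) (u v : ℕ → ℤ) (i : ℕ) : Prop :=
  (1 ≤ i ∧ i + 1 ≤ n ∧ v i < u (i + 1)) ∨ i = n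

/-- The set `C = { i ∈ [n-1] : v_i < u_{i+1} } ∪ { n }`. -/
def Cset (n : ℕ) (u v : ℕ → ℤ) : Set ℕ :=
  {i | 1 ≤ i ∧ i + 1 ≤ n ∧ v i < u (i + 1)} ∪ {n}

/-- `[p,q]` is one of the blocks `[p_s, q_s]` determined by `C`: `q ∈ C`,
no element of `C` lies in `[p, q-1]`, and either `p = 1` or `p - 1 ∈ C`. -/
def IsBlock (n : ℕ) (u v : ℕ → ℤ) (p q : ℕ) : Prop :=
  1 ≤ p ∧ p ≤ q ∧ q ≤ n ∧ inC n u v q ∧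
    (∀ j, p ≤ j → j < q → ¬ inC n u v j) ∧ (p = 1 ∨ inC n u v (p - 1))

/-- `i0 = min { i ∈ [p,q] : ε_i > 1 }` (with the convention `ε_n > 1`). -/
def IsBlockMin (n : ℕ) (u : ℕ → ℤ) (p q i0 : ℕ) : Prop :=
  p ≤ i0 ∧ i0 ≤ q ∧ epsGt1 u n i0 ∧ ∀ j, p ≤ j → j < i0 → ¬ epsGt1 u n j

/-- The comparability graph of a poset: two distinct elements are adjacent
iff they are comparable. -/
def compGraph (α : Type*) [Preorder α] : SimpleGraph α where
  Adj x y := x ≠ y ∧ (x ≤ y ∨ y ≤ x)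
  symm := ⟨fun x y h => ⟨Ne.symm h.1, Or.symm h.2⟩⟩
  loopless := ⟨fun x h => h.1 rfl⟩

/-- A poset is pure if all of its maximal chains have the same cardinality
(equivalently, the same length). -/
def IsPure (α : Type*) [Preorder α] : Prop :=
  ∀ A B : Set α, IsMaxChain (· ≤ ·) A → IsMaxChain (· ≤ ·) B → A.ncard = B.ncard

section atuple

variable {u : ℕ → ℤ} {n i t : ℕ} {j : ℤ}

lemma atuple_of_lt (ht : 1 ≤ t) (htn : t ≤ n) (hti : t < i) : atuple u n i j t = u t := by
  simp [atuple, ht, htn, hti]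

lemma atuple_of_le (ht : 1 ≤ t) (htn : t ≤ n) (hit : i ≤ t) :
    atuple u n i j t = max (j + ((t : ℤ) - i)) (u t) := by
  simp [atuple, ht, htn, Nat.not_lt.mpr hit]

lemma atuple_of_not_mem_Icc (ht : t = 0 ∨ n < t) : atuple u n i j t = 0 := by
  rw [atuple, if_neg (by omega)]

end atuple

lemma add_sub_le_of_lt_succ {v : ℕ → ℤ} {n i t : ℕ} {j : ℤ}
    (hv : ∀ s, i ≤ s → s + 1 ≤ n → v s < v (s + 1)) (hj : j ≤ v i)
    (hit : i ≤ t) (htn : t ≤ n) : j + ((t : ℤ) - i) ≤ v t := by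
  induction t, hit using Nat.le_induction with
  | base => simpa using hj
  | succ t hit ih =>
    have := ih (by omega)
    have := hv t hit htn
    push_cast
    omega

section ladder

variable {u v : ℕ → ℤ} {n i t : ℕ} {j : ℤ}

lemma atuple_mem_Icc (hvmono : ∀ s, 1 ≤ s → s + 1 ≤ n → v s < v (s + 1))
    (huv : ∀ s, 1 ≤ s → s ≤ n → u s < v s) (hi : 1 ≤ i) (hjv : j ≤ v i)
    (ht : 1 ≤ t) (htn : t ≤ n) : u t ≤ atuple u n i j t ∧ atuple u n i j t ≤ v t := by
  rcases lt_or_ge t i with hti | hit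
  · rw [atuple_of_lt ht htn hti]
    exact ⟨le_rfl, (huv t ht htn).le⟩
  · rw [atuple_of_le ht htn hit]
    refine ⟨le_max_right _ _, max_le ?_ (huv t ht htn).le⟩
    exact add_sub_le_of_lt_succ (fun s hs => hvmono s (hi.trans hs)) hjv hit htn

lemma atuple_lt_atuple_succ (humono : ∀ s, 1 ≤ s → s + 1 ≤ n → u s < u (s + 1))
    (ht : 1 ≤ t) (htn : t + 1 ≤ n) : atuple u n i j t < atuple u n i j (t + 1) := by
  have hu := humono t ht htn
  rcases lt_or_ge (t + 1) i with hti | hit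
  · rw [atuple_of_lt ht (by omega) (by omega), atuple_of_lt (by omega) htn hti]
    exact hu
  rw [atuple_of_le (by omega) htn hit]
  rcases lt_or_ge t i with hti | hit'
  · rw [atuple_of_lt ht (by omega) hti]
    exact hu.trans_le (le_max_right _ _)
  · rw [atuple_of_le ht (by omega) hit']
    exact max_lt_max (by push_cast; omega) hu

end ladder

theorem stmt0_general
    (n : ℕ) (u v : ℕ → ℤ)
    (humono : ∀ i, 1 ≤ i → i + 1 ≤ n → u i < u (i + 1))
    (hvmono : ∀ i, 1 ≤ i → i + 1 ≤ n → v i < v (i + 1))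
    (huv : ∀ i, 1 ≤ i → i ≤ n → u i < v i) :
    ∀ i : ℕ, ∀ j : ℤ, 1 ≤ i → i ≤ n → u i + 1 ≤ j → j ≤ v i →
      atuple u n i j ∈ ladderL n u v := by
  intro i j hi _ _ hjv
  exact ⟨fun t => atuple_mem_Icc hvmono huv hi hjv, fun t => atuple_lt_atuple_succ humono,
    fun t => atuple_of_not_mem_Icc⟩

theorem stmt0
    (n m : ℕ) (u v : ℕ → ℤ)
    (hn : 1 ≤ n) (hnm : n < m)
    (hu1 : u 1 = 1)
    (humono : ∀ i, 1 ≤ i → i + 1 ≤ n → u i < u (i + 1))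
    (hum : u n < (m : ℤ))
    (hv1 : 1 < v 1)
    (hvmono : ∀ i, 1 ≤ i → i + 1 ≤ n → v i < v (i + 1))
    (hvn : v n = (m : ℤ))
    (huv : ∀ i, 1 ≤ i → i ≤ n → u i < v i)
    (hstep : ∀ i, 1 ≤ i → i + 1 ≤ n → u (i + 1) ≤ v i + 1) :
    ∀ i : ℕ, ∀ j : ℤ, 1 ≤ i → i ≤ n → u i + 1 ≤ j → j ≤ v i →
      atuple u n i j ∈ ladderL n u v :=
  stmt0_general n u v humono hvmono huv

end LadderPaper
end

section
/- For every integer r ≥ 1, the set of join-irreducible elements of the product poset 𝓛×[r] is exactly { (a_{i,j}, 1) : i ∈ [n], j ∈ [u_i+1, v_i] } ∪ { ((u_1,…,u_n), k) : k ∈ [2,r] }. -/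
/-!
If `d < c` in `𝓛`, lowering `c` by one at the first position where `d` and `c` differ stays in `𝓛`
and above `d`. Hence the lower covers of `c` correspond to the positions `t` with `c t > u t` and
`c t > c (t - 1) + 1`. At every other position the entry is forced,
`c (t + 1) = max (c t + 1) (u (t + 1))`, so `c` is `(u_1, …, u_n)` when there is no such position
and `a_{i, c_i}` when `i` is the only one. Finally, a lower cover of `(c, k)` in `𝓛 × [r]` lowers
exactly one of `c` and `k`, and `k` can be lowered iff `k ≥ 2`.
-/

namespace LadderPaper

theorem _root_.Prod.existsUnique_covBy_mk_iff {α β : Type*} [PartialOrder α] [PartialOrder β]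
    {a : α} {b : β} :
    (∃! p : α × β, p ⋖ (a, b)) ↔
      ((∃! a', a' ⋖ a) ∧ ∀ b', ¬ b' ⋖ b) ∨ ((∀ a', ¬ a' ⋖ a) ∧ ∃! b', b' ⋖ b) := by
  simp only [ExistsUnique, Prod.forall, Prod.exists, Prod.mk_covBy_mk_iff, Prod.mk.injEq]
  constructor
  · rintro ⟨a', b', ⟨ha, rfl⟩ | ⟨hb, rfl⟩, huniq⟩
    · refine .inl ⟨⟨a', ha, fun a'' h => (huniq a'' b' (.inl ⟨h, rfl⟩)).1⟩, fun b'' hb => ?_⟩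
      exact ha.ne' (huniq a b'' (.inr ⟨hb, rfl⟩)).1
    · refine .inr ⟨fun a'' ha => ?_, ⟨b', hb, fun b'' h => (huniq a' b'' (.inr ⟨h, rfl⟩)).2⟩⟩
      exact hb.ne' (huniq a'' b (.inl ⟨ha, rfl⟩)).2
  · rintro (⟨⟨a', ha, hua⟩, hb⟩ | ⟨ha, ⟨b', hb, hub⟩⟩)
    · refine ⟨a', b, .inl ⟨ha, rfl⟩, fun x y h => ?_⟩
      rcases h with ⟨hx, rfl⟩ | ⟨hy, -⟩
      · exact ⟨hua x hx, rfl⟩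
      · exact (hb y hy).elim
    · refine ⟨a, b', .inr ⟨hb, rfl⟩, fun x y h => ?_⟩
      rcases h with ⟨hx, -⟩ | ⟨hy, rfl⟩
      · exact (ha x hx).elim
      · exact ⟨rfl, hub y hy⟩

theorem _root_.OrderIso.existsUnique_covBy_iff {α β : Type*} [Preorder α] [Preorder β]
    (e : α ≃o β) (x : α) : (∃! y, y ⋖ x) ↔ ∃! y, y ⋖ e x :=
  e.toEquiv.existsUnique_congr fun _ => (apply_covBy_apply_iff e).symm

theorem _root_.Set.OrdConnected.covBy_iff_add_one_eq {s : Set ℤ} (hs : s.OrdConnected) {x y : s} :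
    x ⋖ y ↔ (x : ℤ) + 1 = y := by
  rw [← Order.covBy_iff_add_one_eq,
    ← Set.OrdConnected.apply_covBy_apply_iff (OrderEmbedding.subtype _) (by simpa using hs)]
  rfl

theorem Icc_existsUnique_covBy_iff {a b : ℤ} (x : Set.Icc a b) : (∃! y, y ⋖ x) ↔ a < x := by
  simp only [Set.ordConnected_Icc.covBy_iff_add_one_eq]
  constructor
  · rintro ⟨y, hy, -⟩
    linarith [y.2.1]
  · intro h
    have hmem : (x : ℤ) - 1 ∈ Set.Icc a b := ⟨by omega, by linarith [x.2.2]⟩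
    exact ⟨⟨_, hmem⟩, by simp, fun y hy => Subtype.ext (by simp only; omega)⟩

theorem Icc_forall_not_covBy_iff {a b : ℤ} (x : Set.Icc a b) : (∀ y, ¬ y ⋖ x) ↔ (x : ℤ) = a := by
  simp only [Set.ordConnected_Icc.covBy_iff_add_one_eq]
  constructor
  · intro h
    by_contra hne
    have hax : a < x := lt_of_le_of_ne x.2.1 (Ne.symm hne)
    have hmem : (x : ℤ) - 1 ∈ Set.Icc a b := ⟨by omega, by linarith [x.2.2]⟩
    exact h ⟨_, hmem⟩ (by simp)
  · intro h y hy
    linarith [y.2.1]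

theorem update_sub_one_covBy {ι : Type*} [DecidableEq ι] (f : ι → ℤ) (i : ι) :
    Function.update f i (f i - 1) ⋖ f :=
  Pi.covBy_iff_exists_left_eq.2 ⟨i, _, Order.sub_one_covBy _, rfl⟩

theorem update_sub_one_injective {ι : Type*} [DecidableEq ι] (f : ι → ℤ) :
    Function.Injective fun i => Function.update f i (f i - 1) := by
  intro i j h
  by_contra hne
  simpa [Function.update_of_ne hne] using congrFun h i

section Ladder

variable {n : ℕ} {u v c : ℕ → ℤ}

def Lowerable (n : ℕ) (u c : ℕ → ℤ) (t : ℕ) : Prop :=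
  1 ≤ t ∧ t ≤ n ∧ u t < c t ∧ (1 < t → c (t - 1) + 1 < c t)

theorem update_mem_ladderL (hc : c ∈ ladderL n u v) {t : ℕ} (ht : Lowerable n u c t) :
    Function.update c t (c t - 1) ∈ ladderL n u v := by
  obtain ⟨ht1, htn, hut, hprev⟩ := ht
  obtain ⟨hb, hm, ho⟩ := hc
  refine ⟨fun s h1 h2 => ?_, fun s h1 h2 => ?_, fun s hs => ?_⟩
  · rcases eq_or_ne s t with rfl | hst
    · simp only [Function.update_self]
      exact ⟨by omega, by linarith [(hb s h1 h2).2]⟩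
    · simpa only [Function.update_of_ne hst] using hb s h1 h2
  · have := hm s h1 h2
    simp only [Function.update_apply]
    split_ifs <;> subst_vars
    · omega
    · omega
    · have := hprev (by omega)
      simp only [Nat.add_sub_cancel] at this
      omega
    · exact this
  · rw [Function.update_of_ne (by omega)]
    exact ho s hs

theorem exists_lowerable_of_lt {d : ℕ → ℤ} (hc : c ∈ ladderL n u v) (hd : d ∈ ladderL n u v)
    (hdc : d < c) : ∃ t, Lowerable n u c t ∧ d ≤ Function.update c t (c t - 1) := by
  classical
  have hex : ∃ t, d t < c t := by
    by_contra! h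
    exact hdc.ne (le_antisymm hdc.le h)
  obtain ⟨hbc, -, hoc⟩ := hc
  obtain ⟨hbd, hmd, hod⟩ := hd
  set t := Nat.find hex
  have hlt : d t < c t := Nat.find_spec hex
  have hbefore : ∀ s < t, d s = c s := fun s hs =>
    le_antisymm (hdc.le s) (not_lt.mp (Nat.find_min hex hs))
  have ht : 1 ≤ t ∧ t ≤ n := by
    by_contra h
    have := hoc t (by omega)
    have := hod t (by omega)
    omega
  refine ⟨t, ⟨ht.1, ht.2, (hbd t ht.1 ht.2).1.trans_lt hlt, fun h1t => ?_⟩, fun s => ?_⟩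
  · have := hmd (t - 1) (by omega) (by omega)
    rw [Nat.sub_add_cancel ht.1, hbefore (t - 1) (by omega)] at this
    omega
  · rcases eq_or_ne s t with rfl | hst
    · simp only [Function.update_self]; omega
    · simpa only [Function.update_of_ne hst] using hdc.le s

theorem ladderL_covBy_iff {x y : ladderL n u v} :
    y ⋖ x ↔ ∃ t, Lowerable n u x t ∧ (y : ℕ → ℤ) = Function.update x t (x.1 t - 1) := by
  constructor
  · intro h
    obtain ⟨t, ht, hle⟩ := exists_lowerable_of_lt x.2 y.2 h.lt
    refine ⟨t, ht, ?_⟩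
    let z : ladderL n u v := ⟨_, update_mem_ladderL x.2 ht⟩
    have hzx : z < x := (update_sub_one_covBy x.1 t).lt
    exact congrArg Subtype.val ((show y ≤ z from hle).eq_of_not_lt fun hyz => h.2 hyz hzx)
  · rintro ⟨t, -, hy⟩
    refine CovBy.of_image (OrderEmbedding.subtype _) ?_
    simpa only [OrderEmbedding.coe_subtype, hy] using update_sub_one_covBy x.1 t


theorem ladderL_existsUnique_covBy_iff (x : ladderL n u v) :
    (∃! y, y ⋖ x) ↔ ∃! t, Lowerable n u x t := by
  constructor
  · rintro ⟨y, hy, huniq⟩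
    obtain ⟨t, ht, hyt⟩ := ladderL_covBy_iff.1 hy
    refine ⟨t, ht, fun s hs => update_sub_one_injective x.1 ?_⟩
    have := huniq ⟨_, update_mem_ladderL x.2 hs⟩ (ladderL_covBy_iff.2 ⟨s, hs, rfl⟩)
    exact (congrArg Subtype.val this).trans hyt
  · rintro ⟨t, ht, huniq⟩
    refine ⟨⟨_, update_mem_ladderL x.2 ht⟩, ladderL_covBy_iff.2 ⟨t, ht, rfl⟩, fun y hy => ?_⟩
    obtain ⟨s, hs, hys⟩ := ladderL_covBy_iff.1 hy
    exact Subtype.ext (by rw [hys, huniq s hs])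

theorem ladderL_forall_not_covBy_iff (x : ladderL n u v) :
    (∀ y, ¬ y ⋖ x) ↔ ∀ t, ¬ Lowerable n u x t := by
  simp only [ladderL_covBy_iff, not_exists, not_and]
  exact ⟨fun h t ht => h ⟨_, update_mem_ladderL x.2 ht⟩ t ht rfl, fun h _ t ht => (h t ht).elim⟩

theorem not_lowerable_one_iff (hc : c ∈ ladderL n u v) (hn : 1 ≤ n) :
    ¬ Lowerable n u c 1 ↔ c 1 = u 1 := by
  have := (hc.1 1 le_rfl hn).1
  simp only [Lowerable]
  omega

theorem not_lowerable_succ_iff (hc : c ∈ ladderL n u v) {t : ℕ} (ht : 1 ≤ t) (htn : t + 1 ≤ n) :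
    ¬ Lowerable n u c (t + 1) ↔ c (t + 1) = max (c t + 1) (u (t + 1)) := by
  have := (hc.1 (t + 1) (by omega) htn).1
  have := hc.2.1 t ht htn
  simp only [Lowerable, Nat.add_sub_cancel]
  omega

theorem eq_of_forall_not_lowerable (humono : ∀ i, 1 ≤ i → i + 1 ≤ n → u i < u (i + 1))
    (hc : c ∈ ladderL n u v) {k : ℕ}
    (h : ∀ t ≤ k, ¬ Lowerable n u c t) {t : ℕ} (ht : 1 ≤ t) (htk : t ≤ k) (htn : t ≤ n) :
    c t = u t := by
  induction t, ht using Nat.le_induction with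
  | base => exact (not_lowerable_one_iff hc htn).1 (h 1 htk)
  | succ t ht ih =>
    rw [(not_lowerable_succ_iff hc ht htn).1 (h _ htk), ih (by omega) (by omega)]
    have := humono t ht htn
    omega

theorem eq_max_of_forall_not_lowerable
    (humono : ∀ i, 1 ≤ i → i + 1 ≤ n → u i < u (i + 1)) (hc : c ∈ ladderL n u v) {i : ℕ}
    (h : ∀ t, i < t → ¬ Lowerable n u c t) (hi : 1 ≤ i) {t : ℕ} (hit : i ≤ t) (htn : t ≤ n) :
    c t = max (c i + ((t : ℤ) - i)) (u t) := by
  induction t, hit using Nat.le_induction with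
  | base =>
    have := (hc.1 i hi htn).1
    omega
  | succ t hit ih =>
    rw [(not_lowerable_succ_iff hc (by omega) htn).1 (h _ (by omega)), ih (by omega)]
    have := humono t (by omega) htn
    push_cast
    omega

theorem lowerable_atuple_iff (humono : ∀ i, 1 ≤ i → i + 1 ≤ n → u i < u (i + 1)) {i t : ℕ}
    {j : ℤ} (hi : 1 ≤ i) (hin : i ≤ n) (hj : u i < j) :
    Lowerable n u (atuple u n i j) t ↔ t = i := by
  simp only [Lowerable, atuple]
  constructor
  · rintro ⟨ht1, htn, hlt, hprev⟩
    split_ifs at hlt hprev <;> omega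
  · rintro rfl
    have hprev : 1 < t → u (t - 1) < u t := fun h => by
      simpa [Nat.sub_add_cancel hi] using humono (t - 1) (by omega) (by omega)
    split_ifs <;> omega

theorem eq_atuple_of_forall_lowerable_eq (humono : ∀ i, 1 ≤ i → i + 1 ≤ n → u i < u (i + 1))
    (hc : c ∈ ladderL n u v) {i : ℕ} (hi : Lowerable n u c i)
    (huniq : ∀ t, Lowerable n u c t → t = i) : c = atuple u n i (c i) := by
  have hnot : ∀ t, t ≠ i → ¬ Lowerable n u c t := fun t ht h => ht (huniq t h)
  funext t
  simp only [atuple]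
  split_ifs with ht hti
  · exact eq_of_forall_not_lowerable humono hc (k := i - 1) (fun s hs => hnot s (by omega))
      ht.1 (by omega) ht.2
  · exact eq_max_of_forall_not_lowerable humono hc (fun s hs => hnot s (by omega)) hi.1
      (by omega) ht.2
  · exact hc.2.2 t (by omega)

theorem existsUnique_lowerable_iff (humono : ∀ i, 1 ≤ i → i + 1 ≤ n → u i < u (i + 1))
    (hc : c ∈ ladderL n u v) : (∃! t, Lowerable n u c t) ↔ c ∈ PL n u v := by
  constructor
  · rintro ⟨i, hi, huniq⟩
    exact ⟨i, c i, hi.1, hi.2.1, by linarith [hi.2.2.1], (hc.1 i hi.1 hi.2.1).2,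
      eq_atuple_of_forall_lowerable_eq humono hc hi huniq⟩
  · rintro ⟨i, j, hi, hin, hj, -, rfl⟩
    exact ⟨i, (lowerable_atuple_iff humono hi hin hj).2 rfl,
      fun t => (lowerable_atuple_iff humono hi hin hj).1⟩

theorem forall_not_lowerable_iff (humono : ∀ i, 1 ≤ i → i + 1 ≤ n → u i < u (i + 1))
    (hc : c ∈ ladderL n u v) : (∀ t, ¬ Lowerable n u c t) ↔ c = utuple u n := by
  constructor
  · intro h
    funext t
    simp only [utuple]
    split_ifs with ht
    · exact eq_of_forall_not_lowerable humono hc (fun s _ => h s) ht.1 ht.2 ht.2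
    · exact hc.2.2 t (by omega)
  · rintro rfl t ⟨ht1, htn, hlt, -⟩
    simp [utuple, ht1, htn] at hlt

end Ladder

def ladderLrEquivProd (n : ℕ) (u v : ℕ → ℤ) (r : ℤ) :
    ladderLr n u v r ≃o ladderL n u v × Set.Icc (1 : ℤ) r where
  toFun x := (⟨x.1.1, x.2.1⟩, ⟨x.1.2, x.2.2⟩)
  invFun p := ⟨(p.1, p.2), p.1.2, p.2.2⟩
  left_inv _ := rfl
  right_inv _ := rfl
  map_rel_iff' := Iff.rfl

theorem stmt4_general
    (n : ℕ) (u v : ℕ → ℤ)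
    (humono : ∀ i, 1 ≤ i → i + 1 ≤ n → u i < u (i + 1))
    (r : ℤ) :
    ∀ x : ↥(ladderLr n u v r),
      (∃! y : ↥(ladderLr n u v r), y ⋖ x) ↔ (x : (ℕ → ℤ) × ℤ) ∈ PLr n u v r := by
  rintro ⟨⟨c, k⟩, hc, hk1, hkr⟩
  rw [(ladderLrEquivProd n u v r).existsUnique_covBy_iff]
  change (∃! p, p ⋖ ((⟨c, hc⟩ : ladderL n u v), (⟨k, hk1, hkr⟩ : Set.Icc (1 : ℤ) r))) ↔ _
  rw [Prod.existsUnique_covBy_mk_iff, ladderL_existsUnique_covBy_iff,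
    ladderL_forall_not_covBy_iff, existsUnique_lowerable_iff humono hc,
    forall_not_lowerable_iff humono hc, Icc_existsUnique_covBy_iff, Icc_forall_not_covBy_iff]
  show _ ↔ (c ∈ PL n u v ∧ k = 1) ∨ (c = utuple u n ∧ 2 ≤ k ∧ k ≤ r)
  exact or_congr Iff.rfl (and_congr_right fun _ => show 1 < k ↔ _ by omega)

theorem stmt4
    (n m : ℕ) (u v : ℕ → ℤ)
    (hn : 1 ≤ n) (hnm : n < m)
    (hu1 : u 1 = 1)
    (humono : ∀ i, 1 ≤ i → i + 1 ≤ n → u i < u (i + 1))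
    (hum : u n < (m : ℤ))
    (hv1 : 1 < v 1)
    (hvmono : ∀ i, 1 ≤ i → i + 1 ≤ n → v i < v (i + 1))
    (hvn : v n = (m : ℤ))
    (huv : ∀ i, 1 ≤ i → i ≤ n → u i < v i)
    (hstep : ∀ i, 1 ≤ i → i + 1 ≤ n → u (i + 1) ≤ v i + 1)
    (r : ℤ) (hr : 1 ≤ r) :
    ∀ x : ↥(ladderLr n u v r),
      (∃! y : ↥(ladderLr n u v r), y ⋖ x) ↔ (x : (ℕ → ℤ) × ℤ) ∈ PLr n u v r :=
  stmt4_general n u v humono r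

end LadderPaper
end

section
/- Let i ∈ [n] and j ∈ [u_i+1, v_i]. Then: (i) a_{i,j−1} ∈ P_𝓛 (i.e., j−1 ∈ [u_i+1, v_i]) if and only if j ≥ u_i + 2; (ii) a_{i+1,j+1} ∈ P_𝓛 (i.e., i+1 ∈ [n] and j+1 ∈ [u_{i+1}+1, v_{i+1}]) if and only if i ≠ n and j ≥ u_{i+1}; (iii) for b ∈ P_𝓛, the element a_{i,j} covers b in the induced subposet P_𝓛 if and only if b = a_{i,j−1} or b = a_{i+1,j+1}. -/
/-!
Reading off the `i'`-th entry shows that `a_{i',j'} ≤ a_{i,j}` iff `i ≤ i'` and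
`j' - i' ≤ j - i`, so `(i, j) ↦ (i, j - i)` turns `P_𝓛` into a set of lattice points ordered
backwards in the first and forwards in the second coordinate. Below `(i, j)` the points with
nothing in between are then `(i, j - 1)` and `(i + 1, j + 1)`. Parameters outside the index
range give nothing new: `a_{i,j}` collapses to `(u_1, …, u_n)` once `j ≤ u_i`, and that tuple
is not in `P_𝓛`.
-/


namespace LadderPaper

section Ladder

variable {n : ℕ} {u v : ℕ → ℤ}

theorem add_sub_le_of_lt_succ_s5 (hu : ∀ i, 1 ≤ i → i + 1 ≤ n → u i < u (i + 1))
    {a b : ℕ} (ha : 1 ≤ a) (hab : a ≤ b) (hb : b ≤ n) : u a + ((b : ℤ) - a) ≤ u b := by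
  induction b, hab using Nat.le_induction with
  | base => simp
  | succ b hab ih =>
    have := hu b (by omega) hb
    push_cast
    linarith [ih (by omega)]

theorem atuple_le_atuple_iff {i i' : ℕ} {j j' : ℤ} (hi' : 1 ≤ i') (hin' : i' ≤ n)
    (hj' : u i' + 1 ≤ j') :
    atuple u n i' j' ≤ atuple u n i j ↔ i ≤ i' ∧ j' + i ≤ j + i' := by
  constructor
  · intro h
    have := h i'
    simp only [atuple, hi', hin', and_self, if_true, lt_irrefl, if_false, sub_self,
      add_zero] at this
    split_ifs at this <;> omega
  · rintro ⟨hii, hjj⟩ t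
    simp only [atuple]
    split_ifs <;> omega

theorem atuple_lt_atuple_iff {i i' : ℕ} {j j' : ℤ}
    (hi : 1 ≤ i) (hin : i ≤ n) (hj : u i + 1 ≤ j)
    (hi' : 1 ≤ i') (hin' : i' ≤ n) (hj' : u i' + 1 ≤ j') :
    atuple u n i' j' < atuple u n i j ↔ i ≤ i' ∧ j' + i ≤ j + i' ∧ (i' = i → j' ≠ j) := by
  rw [lt_iff_le_not_ge, atuple_le_atuple_iff hi' hin' hj', atuple_le_atuple_iff hi hin hj]
  omega

theorem atuple_eq_utuple (hu : ∀ i, 1 ≤ i → i + 1 ≤ n → u i < u (i + 1))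
    {i : ℕ} {j : ℤ} (hi : 1 ≤ i) (h : n < i ∨ j ≤ u i) :
    atuple u n i j = utuple u n := by
  funext t
  simp only [atuple, utuple]
  split_ifs with ht hti
  · rfl
  · have := add_sub_le_of_lt_succ_s5 hu hi (not_lt.1 hti) ht.2
    omega
  · rfl

theorem atuple_ne_utuple {i : ℕ} {j : ℤ} (hi : 1 ≤ i) (hin : i ≤ n) (hj : u i + 1 ≤ j) :
    atuple u n i j ≠ utuple u n := by
  intro h
  have := congrFun h i
  simp only [atuple, utuple, hi, hin, and_self, if_true, lt_irrefl, if_false, sub_self,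
    add_zero] at this
  omega

theorem atuple_eq_atuple_iff (hu : ∀ i, 1 ≤ i → i + 1 ≤ n → u i < u (i + 1))
    {i i' : ℕ} {j j' : ℤ} (hi : 1 ≤ i)
    (hi' : 1 ≤ i') (hin' : i' ≤ n) (hj' : u i' + 1 ≤ j') :
    atuple u n i' j' = atuple u n i j ↔ i' = i ∧ j' = j := by
  refine ⟨fun h => ?_, by rintro ⟨rfl, rfl⟩; rfl⟩
  by_cases hij : i ≤ n ∧ u i + 1 ≤ j
  · have h₁ := (atuple_le_atuple_iff hi' hin' hj').1 h.le
    have h₂ := (atuple_le_atuple_iff hi hij.1 hij.2).1 h.ge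
    omega
  · rw [atuple_eq_utuple hu hi (by omega)] at h
    exact absurd h (atuple_ne_utuple hi' hin' hj')

theorem covBy_iff_of_eq_atuple (hu : ∀ i, 1 ≤ i → i + 1 ≤ n → u i < u (i + 1))
    (hv : ∀ i, 1 ≤ i → i + 1 ≤ n → v i < v (i + 1))
    {x b : PL n u v} {i i' : ℕ} {j j' : ℤ}
    (hi : 1 ≤ i) (hin : i ≤ n) (hj : u i + 1 ≤ j) (hjv : j ≤ v i)
    (hx : (x : ℕ → ℤ) = atuple u n i j)
    (hi' : 1 ≤ i') (hin' : i' ≤ n) (hj' : u i' + 1 ≤ j')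
    (hb : (b : ℕ → ℤ) = atuple u n i' j') :
    b ⋖ x ↔ (i' = i ∧ j' = j - 1) ∨ (i' = i + 1 ∧ j' = j + 1) := by
  obtain ⟨x, hxP⟩ := x
  obtain ⟨b, hbP⟩ := b
  dsimp only at hx hb
  subst hx hb
  rw [CovBy, Subtype.mk_lt_mk, atuple_lt_atuple_iff hi hin hj hi' hin' hj']
  constructor
  · rintro ⟨hbx, hmin⟩
    by_contra hne
    obtain ⟨k, l, hk, hkn, hl, hlv, hbc, hcx⟩ : ∃ k l, 1 ≤ k ∧ k ≤ n ∧ u k + 1 ≤ l ∧ l ≤ v k ∧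
        atuple u n i' j' < atuple u n k l ∧ atuple u n k l < atuple u n i j := by
      rcases hbx.1.eq_or_lt with rfl | hii'
      · refine ⟨i, j - 1, hi, hin, by omega, by omega, ?_, ?_⟩
        · rw [atuple_lt_atuple_iff hi hin (by omega) hi hin hj']
          omega
        · rw [atuple_lt_atuple_iff hi hin hj hi hin (by omega)]
          omega
      · -- `u` grows by at least one per step, so `u (i + 1) ≤ u i' - (i' - i - 1) ≤ j`
        have hu' := add_sub_le_of_lt_succ_s5 hu (a := i + 1) (by omega) hii' hin'
        have hv' := hv i hi (by omega)
        refine ⟨i + 1, j + 1, by omega, by omega, by omega, by omega, ?_, ?_⟩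
        · rw [atuple_lt_atuple_iff (by omega) (by omega) (by omega) hi' hin' hj']
          omega
        · rw [atuple_lt_atuple_iff hi hin hj (by omega) (by omega) (by omega)]
          omega
    exact hmin (c := ⟨_, k, l, hk, hkn, hl, hlv, rfl⟩) hbc hcx
  · intro h
    refine ⟨by omega, ?_⟩
    rintro ⟨c, hcP⟩ hbc hcx
    rw [Subtype.mk_lt_mk] at hbc hcx
    obtain ⟨k, l, hk, hkn, hl, -, rfl⟩ := hcP
    rw [atuple_lt_atuple_iff hk hkn hl hi' hin' hj'] at hbc
    rw [atuple_lt_atuple_iff hi hin hj hk hkn hl] at hcx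
    omega

end Ladder

theorem stmt5_general
    (n : ℕ) (u v : ℕ → ℤ)
    (humono : ∀ i, 1 ≤ i → i + 1 ≤ n → u i < u (i + 1))
    (hvmono : ∀ i, 1 ≤ i → i + 1 ≤ n → v i < v (i + 1))
    (i : ℕ) (j : ℤ) (hi1 : 1 ≤ i) (hin : i ≤ n) (hj1 : u i + 1 ≤ j) (hj2 : j ≤ v i) :
    ((u i + 1 ≤ j - 1 ∧ j - 1 ≤ v i) ↔ u i + 2 ≤ j) ∧
    ((i + 1 ≤ n ∧ u (i + 1) + 1 ≤ j + 1 ∧ j + 1 ≤ v (i + 1)) ↔ (i ≠ n ∧ u (i + 1) ≤ j)) ∧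
    (∀ x b : ↥(PL n u v), (x : ℕ → ℤ) = atuple u n i j →
      (b ⋖ x ↔
        ((b : ℕ → ℤ) = atuple u n i (j - 1) ∨ (b : ℕ → ℤ) = atuple u n (i + 1) (j + 1)))) := by
  refine ⟨by omega, ⟨fun h => by omega, fun h => ?_⟩, fun x b hx => ?_⟩
  · have := hvmono i hi1 (by omega)
    omega
  · obtain ⟨i', j', hi', hin', hj', -, hb⟩ := b.2
    rw [covBy_iff_of_eq_atuple humono hvmono hi1 hin hj1 hj2 hx hi' hin' hj' hb, hb,
      atuple_eq_atuple_iff humono hi1 hi' hin' hj',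
      atuple_eq_atuple_iff humono (by omega) hi' hin' hj']

theorem stmt5
    (n m : ℕ) (u v : ℕ → ℤ)
    (hn : 1 ≤ n) (hnm : n < m)
    (hu1 : u 1 = 1)
    (humono : ∀ i, 1 ≤ i → i + 1 ≤ n → u i < u (i + 1))
    (hum : u n < (m : ℤ))
    (hv1 : 1 < v 1)
    (hvmono : ∀ i, 1 ≤ i → i + 1 ≤ n → v i < v (i + 1))
    (hvn : v n = (m : ℤ))
    (huv : ∀ i, 1 ≤ i → i ≤ n → u i < v i)
    (hstep : ∀ i, 1 ≤ i → i + 1 ≤ n → u (i + 1) ≤ v i + 1)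
    (i : ℕ) (j : ℤ) (hi1 : 1 ≤ i) (hin : i ≤ n) (hj1 : u i + 1 ≤ j) (hj2 : j ≤ v i) :
    ((u i + 1 ≤ j - 1 ∧ j - 1 ≤ v i) ↔ u i + 2 ≤ j) ∧
    ((i + 1 ≤ n ∧ u (i + 1) + 1 ≤ j + 1 ∧ j + 1 ≤ v (i + 1)) ↔ (i ≠ n ∧ u (i + 1) ≤ j)) ∧
    (∀ x b : ↥(PL n u v), (x : ℕ → ℤ) = atuple u n i j →
      (b ⋖ x ↔
        ((b : ℕ → ℤ) = atuple u n i (j - 1) ∨ (b : ℕ → ℤ) = atuple u n (i + 1) (j + 1)))) :=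
  stmt5_general n u v humono hvmono i j hi1 hin hj1 hj2

end LadderPaper
end

section
/- Suppose v_i ≥ u_{i+1} for all i ∈ [n−1]. If a_{i,u_i+1} and a_{k,u_k+1} are consecutive minima of P_𝓛, then there exists a maximal element x of P_𝓛 with a_{i,u_i+1} ≤ x and a_{k,u_k+1} ≤ x. Similarly, if a_{i,v_i} and a_{k,v_k} are consecutive maxima of P_𝓛, then there exists a minimal element y of P_𝓛 with y ≤ a_{i,v_i} and y ≤ a_{k,v_k}. -/
namespace LadderPaper

lemma PL_finite (n : ℕ) (u v : ℕ → ℤ) : (PL n u v).Finite := by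
  refine ((Set.finite_Icc 1 n).biUnion fun i _ => (Set.finite_Icc (u i + 1) (v i)).image
    (atuple u n i)).subset ?_
  rintro x ⟨i, j, hi1, hin, hj1, hj2, rfl⟩
  exact Set.mem_biUnion ⟨hi1, hin⟩ ⟨j, ⟨hj1, hj2⟩, rfl⟩

lemma _root_.Finite.exists_le_isMax {α : Type*} [Preorder α] [Finite α] (a : α) :
    ∃ b, a ≤ b ∧ IsMax b := by
  obtain ⟨b, hab, hb⟩ := Finite.exists_le_maximal (p := fun _ => True) (a := a) trivial
  exact ⟨b, hab, maximal_true.mp hb⟩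

lemma _root_.Finite.exists_isMin_le {α : Type*} [Preorder α] [Finite α] (a : α) :
    ∃ b, b ≤ a ∧ IsMin b :=
  Finite.exists_le_isMax (α := αᵒᵈ) a

lemma le_add_of_forall_succ_le_add_one {f : ℕ → ℤ} {a b : ℕ} (hab : a ≤ b)
    (h : ∀ t, a ≤ t → t < b → f (t + 1) ≤ f t + 1) : f b ≤ f a + (b - a) := by
  induction b, hab using Nat.le_induction with
  | base => simp
  | succ b hab ih =>
    have hb := h b hab (by omega)
    have ih := ih fun t ht htb => h t ht (by omega)
    push_cast
    linarith

lemma atuple_le_atuple (u : ℕ → ℤ) (n : ℕ) {i k : ℕ} {j j' : ℤ} (hik : i ≤ k)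
    (hj : j' - k ≤ j - i) : atuple u n k j' ≤ atuple u n i j := by
  intro t
  simp only [atuple]
  split_ifs <;> omega

section ConsecutiveExtrema

variable {n : ℕ} {u v : ℕ → ℤ}

/-- The common upper bound is `a_{i,u_{i+1}}`: since `ε_t ≤ 1` strictly between `i` and `k`,
`u_k ≤ u_{i+1} + (k - i - 1)`. -/
lemma exists_isMax_ge_of_consecutive_minima
    (hcn : ∀ i, 1 ≤ i → i + 1 ≤ n → u (i + 1) ≤ v i) {i k : ℕ}
    (hi1 : 1 ≤ i) (hik : i < k) (hkn : k ≤ n) (hεi : epsGt1 u n i)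
    (hcons : ∀ t, i < t → t < k → ¬ epsGt1 u n t) :
    ∃ x : ↥(PL n u v), IsMax x ∧
      atuple u n i (u i + 1) ≤ (x : ℕ → ℤ) ∧ atuple u n k (u k + 1) ≤ (x : ℕ → ℤ) := by
  have hui : u i + 1 < u (i + 1) := by
    simp only [epsGt1] at hεi
    omega
  have huk : u k ≤ u (i + 1) + ((k : ℤ) - (i + 1 : ℕ)) :=
    le_add_of_forall_succ_le_add_one hik fun t ht htk => by
      have := hcons t ht htk
      simp only [epsGt1, not_or] at this
      omega
  have hz : atuple u n i (u (i + 1)) ∈ PL n u v :=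
    ⟨i, u (i + 1), hi1, by omega, hui.le, hcn i hi1 (by omega), rfl⟩
  have := (PL_finite n u v).to_subtype
  obtain ⟨x, hzx, hx⟩ := Finite.exists_le_isMax (⟨_, hz⟩ : ↥(PL n u v))
  refine ⟨x, hx, le_trans ?_ hzx, le_trans ?_ hzx⟩
  · exact atuple_le_atuple u n le_rfl (by omega)
  · exact atuple_le_atuple u n hik.le (by push_cast at huk; omega)

/-- The common lower bound is `a_{k,v_{k-1}+1}`: since `θ_{t-1} ≤ 1` strictly between `i` and
`k`, `v_{k-1} ≤ v_i + (k - 1 - i)`. -/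
lemma exists_isMin_le_of_consecutive_maxima
    (hcn : ∀ i, 1 ≤ i → i + 1 ≤ n → u (i + 1) ≤ v i) {i k : ℕ}
    (hi1 : 1 ≤ i) (hik : i < k) (hkn : k ≤ n) (hθk : thetaGt1 v k)
    (hcons : ∀ t, i < t → t < k → ¬ thetaGt1 v t) :
    ∃ y : ↥(PL n u v), IsMin y ∧
      (y : ℕ → ℤ) ≤ atuple u n i (v i) ∧ (y : ℕ → ℤ) ≤ atuple u n k (v k) := by
  obtain ⟨l, rfl⟩ : ∃ l, k = l + 1 := ⟨k - 1, by omega⟩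
  have hvl : v l + 1 < v (l + 1) := by
    simp only [thetaGt1, add_tsub_cancel_right] at hθk
    omega
  have hvli : v l ≤ v i + ((l : ℤ) - i) :=
    le_add_of_forall_succ_le_add_one (by omega) fun t ht htl => by
      have := hcons (t + 1) (by omega) (by omega)
      simp only [thetaGt1, not_or, add_tsub_cancel_right] at this
      omega
  have hz : atuple u n (l + 1) (v l + 1) ∈ PL n u v :=
    ⟨l + 1, v l + 1, by omega, hkn, by have := hcn l (by omega) hkn; omega, hvl.le, rfl⟩
  have := (PL_finite n u v).to_subtype
  obtain ⟨y, hyz, hy⟩ := Finite.exists_isMin_le (⟨_, hz⟩ : ↥(PL n u v))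
  refine ⟨y, hy, le_trans hyz ?_, le_trans hyz ?_⟩
  · exact atuple_le_atuple u n hik.le (by push_cast; omega)
  · exact atuple_le_atuple u n le_rfl (by omega)

end ConsecutiveExtrema

theorem stmt10_general
    (n : ℕ) (u v : ℕ → ℤ)
    (hcn : ∀ i, 1 ≤ i → i + 1 ≤ n → u (i + 1) ≤ v i) :
    (∀ i k : ℕ, 1 ≤ i → i < k → k ≤ n → epsGt1 u n i → epsGt1 u n k →
      (∀ t, i < t → t < k → ¬ epsGt1 u n t) →
      ∃ x : ↥(PL n u v), IsMax x ∧
        atuple u n i (u i + 1) ≤ (x : ℕ → ℤ) ∧ atuple u n k (u k + 1) ≤ (x : ℕ → ℤ)) ∧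
    (∀ i k : ℕ, 1 ≤ i → i < k → k ≤ n → thetaGt1 v i → thetaGt1 v k →
      (∀ t, i < t → t < k → ¬ thetaGt1 v t) →
      ∃ y : ↥(PL n u v), IsMin y ∧
        (y : ℕ → ℤ) ≤ atuple u n i (v i) ∧ (y : ℕ → ℤ) ≤ atuple u n k (v k)) :=
  ⟨fun _ _ hi1 hik hkn hεi _ hcons =>
      exists_isMax_ge_of_consecutive_minima hcn hi1 hik hkn hεi hcons,
    fun _ _ hi1 hik hkn _ hθk hcons =>
      exists_isMin_le_of_consecutive_maxima hcn hi1 hik hkn hθk hcons⟩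

theorem stmt10
    (n m : ℕ) (u v : ℕ → ℤ)
    (hn : 1 ≤ n) (hnm : n < m)
    (hu1 : u 1 = 1)
    (humono : ∀ i, 1 ≤ i → i + 1 ≤ n → u i < u (i + 1))
    (hum : u n < (m : ℤ))
    (hv1 : 1 < v 1)
    (hvmono : ∀ i, 1 ≤ i → i + 1 ≤ n → v i < v (i + 1))
    (hvn : v n = (m : ℤ))
    (huv : ∀ i, 1 ≤ i → i ≤ n → u i < v i)
    (hstep : ∀ i, 1 ≤ i → i + 1 ≤ n → u (i + 1) ≤ v i + 1)
    (hcn : ∀ i, 1 ≤ i → i + 1 ≤ n → u (i + 1) ≤ v i) :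
    (∀ i k : ℕ, 1 ≤ i → i < k → k ≤ n → epsGt1 u n i → epsGt1 u n k →
      (∀ t, i < t → t < k → ¬ epsGt1 u n t) →
      ∃ x : ↥(PL n u v), IsMax x ∧
        atuple u n i (u i + 1) ≤ (x : ℕ → ℤ) ∧ atuple u n k (u k + 1) ≤ (x : ℕ → ℤ)) ∧
    (∀ i k : ℕ, 1 ≤ i → i < k → k ≤ n → thetaGt1 v i → thetaGt1 v k →
      (∀ t, i < t → t < k → ¬ thetaGt1 v t) →
      ∃ y : ↥(PL n u v), IsMin y ∧
        (y : ℕ → ℤ) ≤ atuple u n i (v i) ∧ (y : ℕ → ℤ) ≤ atuple u n k (v k)) :=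
  stmt10_general n u v hcn

end LadderPaper
end
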